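/- On ℍ×ℂ, the Levi-Civita connection of the invariant metric ds²_{A,B} = A y^{-2} dz dz̄ + B(v² y^{-3} dz dz̄ + y^{-1} dw dw̄ − v y^{-2} dz dw̄ − v y^{-2} dw dz̄) has Christoffel coefficients giving D(dz) = (i/y + iBv²/(2Ay²)) dz² − (iBv/(Ay)) dz dw + (iB/(2A)) dw², where y = Im z, v = Im w. -/

import Mathlib

open Complex Matrix

/-- The coordinate (Wirtinger) derivatives on ℂ×ℂ with respect to the coordinates
(z, z̄, w, w̄), indexed by Fin 4. -/
noncomputable def coordD (i : Fin 4) (f : ℂ × ℂ → ℂ) (p : ℂ × ℂ) : ℂ :=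
  if i = 0 then ((fderiv ℝ f p) (1, 0) - Complex.I * (fderiv ℝ f p) (Complex.I, 0)) / 2
  else if i = 1 then
    ((fderiv ℝ f p) (1, 0) + Complex.I * (fderiv ℝ f p) (Complex.I, 0)) / 2
  else if i = 2 then
    ((fderiv ℝ f p) (0, 1) - Complex.I * (fderiv ℝ f p) (0, Complex.I)) / 2
  else ((fderiv ℝ f p) (0, 1) + Complex.I * (fderiv ℝ f p) (0, Complex.I)) / 2

/-- The invariant metric matrix ds²_{A,B} on ℍ×ℂ in the coordinates (z, z̄, w, w̄):
g_{zz̄} = A/(2y²)+Bv²/(2y³), g_{zw̄} = g_{wz̄} = −Bv/(2y²), g_{ww̄} = B/(2y). -/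
noncomputable def metricMat (A B : ℝ) (p : ℂ × ℂ) : Matrix (Fin 4) (Fin 4) ℂ :=
  let y : ℝ := p.1.im
  let v : ℝ := p.2.im
  let a : ℂ := ((A / (2 * y ^ 2) + B * v ^ 2 / (2 * y ^ 3) : ℝ) : ℂ)
  let b : ℂ := ((-(B * v / (2 * y ^ 2)) : ℝ) : ℂ)
  let c : ℂ := ((B / (2 * y) : ℝ) : ℂ)
  Matrix.of ![![0, a, 0, b], ![a, 0, b, 0], ![0, b, 0, c], ![b, 0, c, 0]]

/-- The Christoffel symbols Γᵏᵢⱼ = (1/2)·g^{kl}(∂ⱼg_{il} + ∂ᵢg_{jl} − ∂_l g_{ij})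
of the invariant metric. -/
noncomputable def Christoffel (A B : ℝ) (k i j : Fin 4) (p : ℂ × ℂ) : ℂ :=
  (1 / 2) * ∑ l : Fin 4, (metricMat A B p)⁻¹ k l *
    (coordD j (fun q => metricMat A B q i l) p
      + coordD i (fun q => metricMat A B q j l) p
      - coordD l (fun q => metricMat A B q i j) p)

/-!
Every entry of the metric depends only on `y = Im z` and `v = Im w`, so the Wirtinger derivative
`∂/∂z = (∂ₓ - i ∂_y)/2` acts on it as `-(i/2) ∂_y`, and `∂/∂w` as `-(i/2) ∂_v`. Since `g_{ij} = 0`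
for holomorphic `i, j`, the term `∂_l g_{ij}` drops out of `Γᶻᵢⱼ`, and only `l = z̄, w̄` contribute,
weighted by the explicit inverse `g^{zz̄} = 2y²/A`, `g^{zw̄} = 2yv/A`, `g^{ww̄} = 2y/B + 2v²/A`.
-/

open ContinuousLinearMap

noncomputable def imFst : ℂ × ℂ →L[ℝ] ℝ := imCLM.comp (fst ℝ ℂ ℂ)

noncomputable def imSnd : ℂ × ℂ →L[ℝ] ℝ := imCLM.comp (snd ℝ ℂ ℂ)

@[simp]
lemma imFst_apply (q : ℂ × ℂ) : imFst q = q.1.im := rfl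

@[simp]
lemma imSnd_apply (q : ℂ × ℂ) : imSnd q = q.2.im := rfl

lemma coordD_const (i : Fin 4) (c : ℂ) (p : ℂ × ℂ) : coordD i (fun _ => c) p = 0 := by
  simp [coordD]

lemma coordD_zero_ofReal_of_hasFDerivAt {F : ℂ × ℂ → ℝ} {a b : ℝ} {p : ℂ × ℂ}
    (h : HasFDerivAt F (a • imFst + b • imSnd) p) :
    coordD 0 (fun q => (F q : ℂ)) p = -(I * a) / 2 := by
  have hF : HasFDerivAt (fun q => (F q : ℂ)) (ofRealCLM.comp (a • imFst + b • imSnd)) p :=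
    ofRealCLM.hasFDerivAt.comp p h
  simp [coordD, hF.fderiv]

lemma coordD_two_ofReal_of_hasFDerivAt {F : ℂ × ℂ → ℝ} {a b : ℝ} {p : ℂ × ℂ}
    (h : HasFDerivAt F (a • imFst + b • imSnd) p) :
    coordD 2 (fun q => (F q : ℂ)) p = -(I * b) / 2 := by
  have hF : HasFDerivAt (fun q => (F q : ℂ)) (ofRealCLM.comp (a • imFst + b • imSnd)) p :=
    ofRealCLM.hasFDerivAt.comp p h
  simp [coordD, hF.fderiv]

lemma hasFDerivAt_imSnd_pow_mul_imFst_zpow (n : ℕ) (m : ℤ) {p : ℂ × ℂ} (hy : p.1.im ≠ 0) :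
    HasFDerivAt (fun q : ℂ × ℂ => q.2.im ^ n * q.1.im ^ m)
      ((m * p.2.im ^ n * p.1.im ^ (m - 1)) • imFst
        + (n * p.2.im ^ (n - 1) * p.1.im ^ m) • imSnd) p := by
  have hzpow := (hasDerivAt_zpow m _ (.inl hy)).comp_hasFDerivAt p imFst.hasFDerivAt
  refine ((imSnd.hasFDerivAt.pow n).mul hzpow).congr_fderiv (ext fun h => ?_)
  simp only [imFst_apply, imSnd_apply, Function.comp_apply, nsmul_eq_mul, _root_.add_apply,
    _root_.smul_apply, smul_eq_mul]
  ring

noncomputable def metricZZbar (A B : ℝ) (q : ℂ × ℂ) : ℝ :=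
  A / (2 * q.1.im ^ 2) + B * q.2.im ^ 2 / (2 * q.1.im ^ 3)

noncomputable def metricZWbar (B : ℝ) (q : ℂ × ℂ) : ℝ := -(B * q.2.im / (2 * q.1.im ^ 2))

noncomputable def metricWWbar (B : ℝ) (q : ℂ × ℂ) : ℝ := B / (2 * q.1.im)

lemma metricMat_eq (A B : ℝ) (q : ℂ × ℂ) :
    metricMat A B q = of ![![0, (metricZZbar A B q : ℂ), 0, (metricZWbar B q : ℂ)],
      ![(metricZZbar A B q : ℂ), 0, (metricZWbar B q : ℂ), 0],
      ![0, (metricZWbar B q : ℂ), 0, (metricWWbar B q : ℂ)],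
      ![(metricZWbar B q : ℂ), 0, (metricWWbar B q : ℂ), 0]] := rfl

lemma metricMat_symm (A B : ℝ) (q : ℂ × ℂ) (i j : Fin 4) :
    metricMat A B q i j = metricMat A B q j i := by
  fin_cases i <;> fin_cases j <;> rfl

lemma christoffel_symm (A B : ℝ) (k i j : Fin 4) (p : ℂ × ℂ) :
    Christoffel A B k i j p = Christoffel A B k j i p := by
  simp only [Christoffel, metricMat_symm A B _ i j, add_comm (coordD j _ p)]

lemma hasFDerivAt_metricZZbar (A B : ℝ) {p : ℂ × ℂ} (hy : p.1.im ≠ 0) :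
    HasFDerivAt (metricZZbar A B)
      ((-A / p.1.im ^ 3 - 3 * B * p.2.im ^ 2 / (2 * p.1.im ^ 4)) • imFst
        + (B * p.2.im / p.1.im ^ 3) • imSnd) p := by
  have h := ((hasFDerivAt_imSnd_pow_mul_imFst_zpow 0 (-2) hy).const_mul (A / 2)).add
    ((hasFDerivAt_imSnd_pow_mul_imFst_zpow 2 (-3) hy).const_mul (B / 2))
  refine (h.congr_fderiv (ext fun h => ?_)).congr_of_eventuallyEq (.of_forall fun q => ?_)
  · simp only [Int.reduceNeg, Int.cast_neg, Int.cast_ofNat, pow_zero, mul_one, Int.reduceSub,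
      _root_.zpow_neg, zpow_ofNat, neg_mul, CharP.cast_eq_zero, zero_tsub, zero_mul, zero_smul,
      add_zero, Nat.cast_ofNat, Nat.add_one_sub_one, pow_one, smul_add, _root_.add_apply,
      _root_.smul_apply, smul_eq_mul, mul_neg]
    field_simp
    ring
  · simp only [metricZZbar, pow_zero, Int.reduceNeg, _root_.zpow_neg, zpow_ofNat, one_mul,
      Pi.add_apply]
    ring

lemma hasFDerivAt_metricZWbar (B : ℝ) {p : ℂ × ℂ} (hy : p.1.im ≠ 0) :
    HasFDerivAt (metricZWbar B)
      ((B * p.2.im / p.1.im ^ 3) • imFst + (-(B / (2 * p.1.im ^ 2))) • imSnd) p := by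
  have h := (hasFDerivAt_imSnd_pow_mul_imFst_zpow 1 (-2) hy).const_mul (-(B / 2))
  refine (h.congr_fderiv (ext fun h => ?_)).congr_of_eventuallyEq (.of_forall fun q => ?_)
  · simp only [Int.reduceNeg, Int.cast_neg, Int.cast_ofNat, pow_one, neg_mul, Int.reduceSub,
      _root_.zpow_neg, zpow_ofNat, Nat.cast_one, tsub_self, pow_zero, mul_one, one_mul, smul_add,
      neg_smul, _root_.add_apply, _root_.neg_apply, _root_.smul_apply, smul_eq_mul, mul_neg,
      neg_neg]
    field_simp
  · simp only [metricZWbar, pow_one, Int.reduceNeg, _root_.zpow_neg, zpow_ofNat, neg_mul,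
      neg_inj]
    ring

lemma hasFDerivAt_metricWWbar (B : ℝ) {p : ℂ × ℂ} (hy : p.1.im ≠ 0) :
    HasFDerivAt (metricWWbar B) ((-(B / (2 * p.1.im ^ 2))) • imFst + (0 : ℝ) • imSnd) p := by
  have h := (hasFDerivAt_imSnd_pow_mul_imFst_zpow 0 (-1) hy).const_mul (B / 2)
  refine (h.congr_fderiv (ext fun h => ?_)).congr_of_eventuallyEq (.of_forall fun q => ?_)
  · simp only [Int.reduceNeg, Int.cast_neg, Int.cast_one, pow_zero, mul_one, Int.reduceSub,
      _root_.zpow_neg, zpow_ofNat, neg_mul, one_mul, CharP.cast_eq_zero, zero_tsub, pow_one,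
      zero_mul, zero_smul, add_zero, _root_.smul_apply, smul_eq_mul, mul_neg, neg_inj]
    field_simp
  · simp only [metricWWbar, pow_zero, Int.reduceNeg, _root_.zpow_neg, zpow_ofNat, pow_one,
      one_mul]
    ring

lemma metricMat_inv (A B : ℝ) (hA : A ≠ 0) (hB : B ≠ 0) (p : ℂ × ℂ) (hy : p.1.im ≠ 0) :
    (metricMat A B p)⁻¹ = of
      ![![0, ((2 * p.1.im ^ 2 / A : ℝ) : ℂ), 0, ((2 * p.1.im * p.2.im / A : ℝ) : ℂ)],
        ![((2 * p.1.im ^ 2 / A : ℝ) : ℂ), 0, ((2 * p.1.im * p.2.im / A : ℝ) : ℂ), 0],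
        ![0, ((2 * p.1.im * p.2.im / A : ℝ) : ℂ), 0,
          ((2 * p.1.im / B + 2 * p.2.im ^ 2 / A : ℝ) : ℂ)],
        ![((2 * p.1.im * p.2.im / A : ℝ) : ℂ), 0,
          ((2 * p.1.im / B + 2 * p.2.im ^ 2 / A : ℝ) : ℂ), 0]] := by
  have hyC : (p.1.im : ℂ) ≠ 0 := ofReal_ne_zero.mpr hy
  have hAC : (A : ℂ) ≠ 0 := ofReal_ne_zero.mpr hA
  have hBC : (B : ℂ) ≠ 0 := ofReal_ne_zero.mpr hB
  refine inv_eq_right_inv ?_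
  ext i j
  fin_cases i <;> fin_cases j <;>
    simp only [metricMat_eq, metricZZbar, metricZWbar, metricWWbar, mul_apply, one_apply,
      Fin.sum_univ_four, of_apply, cons_val', cons_val_fin_one, cons_val_zero, cons_val_one,
      cons_val, Fin.isValue, Fin.zero_eta, Fin.mk_one, Fin.reduceFinMk, Fin.reduceEq, reduceIte,
      zero_ne_one, one_ne_zero, mul_zero, zero_mul, zero_add, add_zero, neg_mul, ofReal_add,
      ofReal_div, ofReal_mul, ofReal_ofNat, ofReal_pow, ofReal_neg] <;>
    field_simp <;> ring

-- `D(dz) = Σ Γᶻᵢⱼ dzⁱ dzʲ` over holomorphic `i, j`, so its `dz dw` coefficient is `Γᶻ_{zw} + Γᶻ_{wz}`.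
/-- the (1,0)-part of the Levi-Civita connection of the invariant
metric ds²_{A,B} on ℍ×ℂ satisfies
D(dz) = (i/y + iBv²/(2Ay²)) dz² − (iBv/(Ay)) dz dw + (iB/(2A)) dw²,
i.e. the Christoffel symbols with upper index z and lower holomorphic indices are
Γᶻ_{zz} = i/y + iBv²/(2Ay²), Γᶻ_{zw} = Γᶻ_{wz} = −iBv/(2Ay), Γᶻ_{ww} = iB/(2A). -/
theorem christoffel_Ddz (A B : ℝ) (hA : 0 < A) (hB : 0 < B)
    (p : ℂ × ℂ) (hy : 0 < p.1.im) :
    Christoffel A B 0 0 0 p =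
      Complex.I / ((p.1.im : ℝ) : ℂ) +
        Complex.I * (B : ℂ) * ((p.2.im : ℝ) : ℂ) ^ 2 /
          (2 * (A : ℂ) * ((p.1.im : ℝ) : ℂ) ^ 2) ∧
    Christoffel A B 0 0 2 p =
      -(Complex.I * (B : ℂ) * ((p.2.im : ℝ) : ℂ) /
        (2 * (A : ℂ) * ((p.1.im : ℝ) : ℂ))) ∧
    Christoffel A B 0 2 0 p =
      -(Complex.I * (B : ℂ) * ((p.2.im : ℝ) : ℂ) /
        (2 * (A : ℂ) * ((p.1.im : ℝ) : ℂ))) ∧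
    Christoffel A B 0 2 2 p = Complex.I * (B : ℂ) / (2 * (A : ℂ)) := by
  have hy₀ : p.1.im ≠ 0 := hy.ne'
  have hyC : (p.1.im : ℂ) ≠ 0 := ofReal_ne_zero.mpr hy₀
  have hAC : (A : ℂ) ≠ 0 := ofReal_ne_zero.mpr hA.ne'
  have hZZ := hasFDerivAt_metricZZbar A B hy₀
  have hZW := hasFDerivAt_metricZWbar B hy₀
  have hWW := hasFDerivAt_metricWWbar B hy₀
  rw [christoffel_symm A B 0 2 0]
  refine ⟨?_, ?_, ?_, ?_⟩ <;>
    rw [Christoffel, metricMat_inv A B hA.ne' hB.ne' p hy₀] <;>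
    simp only [Fin.sum_univ_four, metricMat_eq, of_apply, cons_val', cons_val_fin_one,
      cons_val_zero, cons_val_one, cons_val, Fin.isValue, coordD_const, sub_zero, add_zero,
      mul_zero, zero_add, add_halves, mul_neg, neg_neg, neg_zero, zero_div, one_div, ofReal_div,
      ofReal_mul, ofReal_ofNat, ofReal_pow, ofReal_add, ofReal_sub, ofReal_neg, ofReal_zero,
      coordD_zero_ofReal_of_hasFDerivAt hZZ, coordD_two_ofReal_of_hasFDerivAt hZZ,
      coordD_zero_ofReal_of_hasFDerivAt hZW, coordD_two_ofReal_of_hasFDerivAt hZW,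
      coordD_zero_ofReal_of_hasFDerivAt hWW, coordD_two_ofReal_of_hasFDerivAt hWW] <;>
    field_simp <;> ring
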